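/- Let m₁ > 0 and m₂ = 2 m₁. Let v, ṽ : ℝ × ℝ² → ℝ be smooth functions both satisfying (□ + m₁²) v = 0 and (□ + m₁²) ṽ = 0 on ℝ × ℝ². Then for every index 0 ≤ a ≤ 2, the exact identity H_{2,a}(v, ṽ) = (1/(2 m₁²)) (□ + m₂²)( v ∂_a ṽ ) + (1/m₁²) Σ_{b,c=0}^{2} η_{bc} Q_{ba}(v, ∂_c ṽ) holds pointwise on ℝ × ℝ², where H_{2,a}(v, ṽ) = v ∂_a ṽ − ṽ ∂_a v. -/

import Mathlib

/- Coordinates on ℝ × ℝ² are encoded as points `x : Fin 3 → ℝ` with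
`t = x 0`, `x₁ = x 1`, `x₂ = x 2`. -/

/-- The partial derivative `∂ₐ`. -/
noncomputable def pd (a : Fin 3) (f : (Fin 3 → ℝ) → ℝ) : (Fin 3 → ℝ) → ℝ :=
  fun x => fderiv ℝ f x (Pi.single a 1)

/-- The d'Alembertian `□ = ∂₀² - ∂₁² - ∂₂²`. -/
noncomputable def dAlembert (f : (Fin 3 → ℝ) → ℝ) : (Fin 3 → ℝ) → ℝ :=
  fun x => pd 0 (pd 0 f) x - pd 1 (pd 1 f) x - pd 2 (pd 2 f) x

/-- The strong null forms `Q_{ab}(φ, ψ) = (∂_a φ)(∂_b ψ) - (∂_b φ)(∂_a ψ)`. -/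
noncomputable def Qab (a b : Fin 3) (f g : (Fin 3 → ℝ) → ℝ) : (Fin 3 → ℝ) → ℝ :=
  fun x => pd a f x * pd b g x - pd b f x * pd a g x

/-- The Minkowski metric coefficients `(η_{ab}) = diag(-1, 1, 1)`. -/
def eta (a b : Fin 3) : ℝ := if a = b then (if a = 0 then -1 else 1) else 0

lemma pd_contDiff (a : Fin 3) {f : (Fin 3 → ℝ) → ℝ} (hf : ContDiff ℝ (⊤ : ℕ∞) f) :
    ContDiff ℝ (⊤ : ℕ∞) (pd a f) := by
  have h : ContDiff ℝ (⊤ : ℕ∞) (fderiv ℝ f) := hf.fderiv_right (m := (⊤ : ℕ∞)) (by simp)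
  exact (ContinuousLinearMap.apply ℝ ℝ (Pi.single a 1)).contDiff.comp h

lemma pd_add {f g : (Fin 3 → ℝ) → ℝ} (hf : Differentiable ℝ f) (hg : Differentiable ℝ g)
    (a : Fin 3) (x : Fin 3 → ℝ) :
    pd a (fun y => f y + g y) x = pd a f x + pd a g x := by
  unfold pd
  rw [fderiv_fun_add (hf x) (hg x)]
  simp

lemma pd_sub {f g : (Fin 3 → ℝ) → ℝ} (hf : Differentiable ℝ f) (hg : Differentiable ℝ g)
    (a : Fin 3) (x : Fin 3 → ℝ) :
    pd a (fun y => f y - g y) x = pd a f x - pd a g x := by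
  unfold pd
  rw [fderiv_fun_sub (hf x) (hg x)]
  simp

lemma pd_mul {f g : (Fin 3 → ℝ) → ℝ} (hf : Differentiable ℝ f) (hg : Differentiable ℝ g)
    (a : Fin 3) (x : Fin 3 → ℝ) :
    pd a (fun y => f y * g y) x = pd a f x * g x + f x * pd a g x := by
  unfold pd
  rw [fderiv_fun_mul (hf x) (hg x)]
  simp
  ring

lemma pd_const_mul (c : ℝ) {g : (Fin 3 → ℝ) → ℝ} (hg : Differentiable ℝ g)
    (a : Fin 3) (x : Fin 3 → ℝ) :
    pd a (fun y => c * g y) x = c * pd a g x := by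
  unfold pd
  rw [fderiv_const_mul (hg x) c]
  simp

lemma pd_comm {f : (Fin 3 → ℝ) → ℝ} (hf : ContDiff ℝ (⊤ : ℕ∞) f) (a b : Fin 3) (x : Fin 3 → ℝ) :
    pd a (pd b f) x = pd b (pd a f) x := by
  have hdf : Differentiable ℝ f := hf.differentiable (by simp)
  have h1 : ContDiff ℝ (⊤ : ℕ∞) (fderiv ℝ f) := hf.fderiv_right (m := (⊤ : ℕ∞)) (by simp)
  have hF : HasFDerivAt (fderiv ℝ f) (fderiv ℝ (fderiv ℝ f) x) x :=
    (h1.differentiable (by simp) x).hasFDerivAt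
  have key : ∀ (u : Fin 3 → ℝ) (b : Fin 3),
      fderiv ℝ (fun y => fderiv ℝ f y u) x (Pi.single b 1)
        = fderiv ℝ (fderiv ℝ f) x (Pi.single b 1) u := by
    intro u b
    have h2 : HasFDerivAt (fun y => fderiv ℝ f y u)
        ((ContinuousLinearMap.apply ℝ ℝ u).comp (fderiv ℝ (fderiv ℝ f) x)) x :=
      (ContinuousLinearMap.apply ℝ ℝ u).hasFDerivAt.comp x hF
    rw [h2.fderiv]; rfl
  unfold pd
  rw [key, key]
  exact second_derivative_symmetric (fun y => (hdf y).hasFDerivAt) hF _ _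

lemma sndpd_mul {f g : (Fin 3 → ℝ) → ℝ} (hf : ContDiff ℝ (⊤ : ℕ∞) f) (hg : ContDiff ℝ (⊤ : ℕ∞) g)
    (b : Fin 3) (x : Fin 3 → ℝ) :
    pd b (pd b (fun y => f y * g y)) x
      = pd b (pd b f) x * g x + 2 * (pd b f x * pd b g x) + f x * pd b (pd b g) x := by
  have hdf := hf.differentiable (by simp)
  have hdg := hg.differentiable (by simp)
  have hdf' := (pd_contDiff b hf).differentiable (by simp)
  have hdg' := (pd_contDiff b hg).differentiable (by simp)
  have h1 : pd b (fun y => f y * g y) = fun y => pd b f y * g y + f y * pd b g y :=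
    funext (pd_mul hdf hdg b)
  rw [h1, pd_add (f := fun y => pd b f y * g y) (g := fun y => f y * pd b g y)
    (hdf'.mul hdg) (hdf.mul hdg'), pd_mul hdf' hdg b x, pd_mul hdf hdg' b x]
  ring

/-- with resonant masses `m₂ = 2 m₁ > 0`, if `(□ + m₁²) v = 0`
and `(□ + m₁²) ṽ = 0`, then for every `0 ≤ a ≤ 2`,
`H_{2,a}(v, ṽ) = (1/(2 m₁²)) (□ + m₂²)(v ∂_a ṽ)
  + (1/m₁²) Σ_{b,c} η_{bc} Q_{ba}(v, ∂_c ṽ)` pointwise, where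
`H_{2,a}(v, ṽ) = v ∂_a ṽ − ṽ ∂_a v`. -/
theorem resonant_identity_H2 (m₁ m₂ : ℝ) (hm₁ : 0 < m₁) (hm₂ : m₂ = 2 * m₁)
    (v vt : (Fin 3 → ℝ) → ℝ) (hv : ContDiff ℝ (⊤ : ℕ∞) v) (hvt : ContDiff ℝ (⊤ : ℕ∞) vt)
    (hveq : ∀ x, dAlembert v x + m₁ ^ 2 * v x = 0)
    (hvteq : ∀ x, dAlembert vt x + m₁ ^ 2 * vt x = 0)
    (a : Fin 3) (x : Fin 3 → ℝ) :
    v x * pd a vt x - vt x * pd a v x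
      = (1 / (2 * m₁ ^ 2)) *
          (dAlembert (fun y => v y * pd a vt y) x + m₂ ^ 2 * (v x * pd a vt x))
        + (1 / m₁ ^ 2) *
          ∑ b : Fin 3, ∑ c : Fin 3, eta b c * Qab b a v (pd c vt) x := by
  have hm : m₁ ^ 2 ≠ 0 := pow_ne_zero 2 hm₁.ne'
  have hw : ContDiff ℝ (⊤ : ℕ∞) (pd a vt) := pd_contDiff a hvt
  have hc2 : ∀ b : Fin 3, ContDiff ℝ (⊤ : ℕ∞) (pd b (pd b vt)) :=
    fun b => pd_contDiff b (pd_contDiff b hvt)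
  -- □ of the product
  have hQuad : dAlembert (fun y => v y * pd a vt y) x
      = dAlembert v x * pd a vt x
        + 2 * (pd 0 v x * pd 0 (pd a vt) x - pd 1 v x * pd 1 (pd a vt) x
            - pd 2 v x * pd 2 (pd a vt) x)
        + v x * dAlembert (pd a vt) x := by
    unfold dAlembert
    rw [sndpd_mul hv hw 0 x, sndpd_mul hv hw 1 x, sndpd_mul hv hw 2 x]
    ring
  -- □ (∂ₐ ṽ) = -m₁² ∂ₐ ṽ
  have hcomm : ∀ b : Fin 3, pd b (pd b (pd a vt)) x = pd a (pd b (pd b vt)) x := by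
    intro b
    rw [show pd b (pd a vt) = pd a (pd b vt) from funext fun y => pd_comm hvt b a y]
    exact (pd_comm (pd_contDiff b hvt) a b x).symm
  have hDw : dAlembert (pd a vt) x = -(m₁ ^ 2) * pd a vt x := by
    have e0 : (fun y => pd 0 (pd 0 vt) y - pd 1 (pd 1 vt) y - pd 2 (pd 2 vt) y)
        = fun y => -(m₁ ^ 2) * vt y := by
      funext y
      have := hvteq y
      unfold dAlembert at this
      linarith
    have e1 : pd a (fun y => pd 0 (pd 0 vt) y - pd 1 (pd 1 vt) y - pd 2 (pd 2 vt) y) x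
        = pd a (pd 0 (pd 0 vt)) x - pd a (pd 1 (pd 1 vt)) x - pd a (pd 2 (pd 2 vt)) x := by
      rw [pd_sub (f := fun y => pd 0 (pd 0 vt) y - pd 1 (pd 1 vt) y)
          (((hc2 0).differentiable (by simp)).sub ((hc2 1).differentiable (by simp)))
          ((hc2 2).differentiable (by simp)) a x,
        pd_sub ((hc2 0).differentiable (by simp)) ((hc2 1).differentiable (by simp)) a x]
    have e2 : pd a (fun y => pd 0 (pd 0 vt) y - pd 1 (pd 1 vt) y - pd 2 (pd 2 vt) y) x
        = -(m₁ ^ 2) * pd a vt x := by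
      rw [e0, pd_const_mul (-(m₁ ^ 2)) (hvt.differentiable (by simp)) a x]
    unfold dAlembert
    rw [hcomm 0, hcomm 1, hcomm 2, ← e1, e2]
  -- the null-form sum
  have hsum : ∑ b : Fin 3, ∑ c : Fin 3, eta b c * Qab b a v (pd c vt) x
      = -(pd 0 v x * pd a (pd 0 vt) x - pd a v x * pd 0 (pd 0 vt) x)
        + (pd 1 v x * pd a (pd 1 vt) x - pd a v x * pd 1 (pd 1 vt) x)
        + (pd 2 v x * pd a (pd 2 vt) x - pd a v x * pd 2 (pd 2 vt) x) := by
    simp [Fin.sum_univ_three, eta, Qab]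
  have hsw : ∀ b : Fin 3, pd a (pd b vt) x = pd b (pd a vt) x := fun b => pd_comm hvt a b x
  have hvx := hveq x
  have hvtx := hvteq x
  unfold dAlembert at hvx hvtx
  rw [hQuad, hDw, hsum, hsw 0, hsw 1, hsw 2, hm₂]
  have hv0 : pd 0 (pd 0 v) x - pd 1 (pd 1 v) x - pd 2 (pd 2 v) x = -(m₁ ^ 2) * v x := by
    linarith
  have hvt0 : pd 0 (pd 0 vt) x - pd 1 (pd 1 vt) x - pd 2 (pd 2 vt) x = -(m₁ ^ 2) * vt x := by
    linarith
  unfold dAlembert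
  rw [hv0]
  field_simp
  linear_combination (-2 * pd a v x) * hvt0
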